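/- Let X be a real n×p matrix and Σ a real symmetric positive definite n×n matrix. Assume XᵀX is invertible (equivalently, X has full column rank p); then XᵀΣ⁻¹X is also positive definite and invertible, and the p×p matrix (XᵀX)⁻¹ Xᵀ Σ X (XᵀX)⁻¹ − (XᵀΣ⁻¹X)⁻¹ is positive semidefinite. (This is the statement that the generalized least squares estimator is at least as efficient as the ordinary least squares estimator in a linear model with error covariance Σ.) -/

import Mathlib

/-!
Gauss–Markov in matrix form. For any left inverse `L` of `X` (the OLS one being `(XᵀX)⁻¹Xᵀ`),
put `C = (XᵀΣ⁻¹X)⁻¹` and `G = Σ⁻¹XC`. Because `LX = 1` and `XᵀG = 1`, all cross terms of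
`(Lᵀ - G)ᵀ Σ (Lᵀ - G)` equal `±C`, so this positive semidefinite matrix is `LΣLᵀ - C`.
Positive definiteness of `XᵀΣ⁻¹X` comes from `Σ⁻¹ ≻ 0` and injectivity of `X`.
-/

open Matrix

namespace Matrix

variable {n p K : Type*} [Fintype n] [Fintype p] [DecidableEq p] [Field K]

theorem mulVec_injective_of_isUnit_mul {Y : Matrix p n K} {X : Matrix n p K}
    (h : IsUnit (Y * X)) : Function.Injective X.mulVec := by
  refine Function.Injective.of_comp (f := Y.mulVec) ?_
  simpa only [Function.comp_def, mulVec_mulVec] using mulVec_injective_iff_isUnit.mpr h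

variable [DecidableEq n] [PartialOrder K] [StarRing K]

theorem PosDef.posSemidef_mul_mul_conjTranspose_sub_inv {S : Matrix n n K} (hS : S.PosDef)
    {X : Matrix n p K} {L : Matrix p n K} (hLX : L * X = 1) :
    (L * S * Lᴴ - (Xᴴ * S⁻¹ * X)⁻¹).PosSemidef := by
  set C := (Xᴴ * S⁻¹ * X)⁻¹
  set G := S⁻¹ * X * C
  have hK : IsUnit (Xᴴ * S⁻¹ * X) :=
    (hS.inv.conjTranspose_mul_mul_same (mulVec_injective_of_isUnit_mul (hLX ▸ isUnit_one))).isUnit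
  have hC : Cᴴ = C := (isHermitian_conjTranspose_mul_mul X hS.inv.isHermitian).inv
  have hSG : S * G = X * C := by
    simp only [G, ← Matrix.mul_assoc, mul_nonsing_inv _ ((isUnit_iff_isUnit_det S).mp hS.isUnit),
      Matrix.one_mul]
  have hGS : Gᴴ * S = C * Xᴴ := by
    rw [← hS.isHermitian.eq, ← conjTranspose_mul, hSG, conjTranspose_mul, hC]
  have hXG : Xᴴ * G = 1 := by
    simp only [G, C, ← Matrix.mul_assoc, mul_nonsing_inv _ ((isUnit_iff_isUnit_det _).mp hK)]
  have hXL : Xᴴ * Lᴴ = 1 := by rw [← conjTranspose_mul, hLX, conjTranspose_one]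
  have hD : (Lᴴ - G)ᴴ * S * (Lᴴ - G) = L * S * Lᴴ - C := calc
    (Lᴴ - G)ᴴ * S * (Lᴴ - G) = L * S * Lᴴ - L * (S * G) - Gᴴ * S * Lᴴ + Gᴴ * S * G := by
        simp only [conjTranspose_sub, conjTranspose_conjTranspose, Matrix.sub_mul, Matrix.mul_sub,
          Matrix.mul_assoc]
        abel
    _ = _ := by
        rw [hSG, hGS, ← Matrix.mul_assoc L X C, hLX]
        simp only [Matrix.mul_assoc, hXL, hXG, Matrix.one_mul, Matrix.mul_one]
        abel
  exact hD ▸ hS.posSemidef.conjTranspose_mul_mul_same (Lᴴ - G)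

end Matrix

/-- (GLS is at least as efficient as OLS.) If `X` is `n × p` with
`XᵀX` invertible and `Σ` is symmetric positive definite, then `XᵀΣ⁻¹X` is positive
definite (hence invertible) and
`(XᵀX)⁻¹ XᵀΣX (XᵀX)⁻¹ - (XᵀΣ⁻¹X)⁻¹` is positive semidefinite. -/
theorem stmt_10 (n p : ℕ) (X : Matrix (Fin n) (Fin p) ℝ)
    (S : Matrix (Fin n) (Fin n) ℝ) (hS : S.PosDef)
    (hX : IsUnit (Xᵀ * X)) :
    (Xᵀ * S⁻¹ * X).PosDef ∧ IsUnit (Xᵀ * S⁻¹ * X) ∧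
      ((Xᵀ * X)⁻¹ * (Xᵀ * S * X) * (Xᵀ * X)⁻¹ - (Xᵀ * S⁻¹ * X)⁻¹).PosSemidef := by
  have hK : (Xᵀ * S⁻¹ * X).PosDef := by
    simpa only [conjTranspose_eq_transpose_of_trivial] using
      hS.inv.conjTranspose_mul_mul_same (mulVec_injective_of_isUnit_mul hX)
  refine ⟨hK, hK.isUnit, ?_⟩
  have hLX : (Xᵀ * X)⁻¹ * Xᵀ * X = 1 := by
    rw [Matrix.mul_assoc, nonsing_inv_mul _ ((isUnit_iff_isUnit_det _).mp hX)]
  have hA : ((Xᵀ * X)⁻¹)ᵀ = (Xᵀ * X)⁻¹ := by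
    rw [transpose_nonsing_inv, transpose_mul, transpose_transpose]
  simpa only [conjTranspose_eq_transpose_of_trivial, transpose_mul, transpose_transpose, hA,
    Matrix.mul_assoc] using hS.posSemidef_mul_mul_conjTranspose_sub_inv hLX
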